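/- arXiv:1512.04424 — 5 statements merged into one kernel-verified Lean document; each statement's English description precedes it below -/
import Mathlib

section
/- Every microscopic set is contained in a microscopic G_δ set, i.e., for every microscopic A ⊆ ℝ there exists a G_δ set G with A ⊆ G and G microscopic. -/
open Set MeasureTheory

/-- `M` can be covered by a sequence of intervals whose `k`-th length is at most `len k`. -/
def IntervalCover (M : Set ℝ) (len : ℕ → ℝ) : Prop :=
  ∃ a b : ℕ → ℝ, M ⊆ ⋃ k, Set.Icc (a k) (b k) ∧ ∀ k, b k - a k ≤ len k

def Microscopic (M : Set ℝ) : Prop :=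
  ∀ ε : ℝ, 0 < ε → ε < 1 → IntervalCover M (fun k => ε ^ k)

def Nanoscopic (M : Set ℝ) : Prop :=
  ∀ ε : ℝ, 0 < ε → ε < 1 → IntervalCover M (fun k => ε ^ (2 ^ k))

def Picoscopic (M : Set ℝ) : Prop :=
  ∀ ε : ℝ, 0 < ε → ε < 1 → IntervalCover M (fun k => ε ^ (Nat.factorial (k + 1)))

def FnMicroscopic (f : ℕ → ℝ → ℝ) (M : Set ℝ) : Prop :=
  ∀ ε : ℝ, 0 < ε → ε < 1 → IntervalCover M (fun k => f k ε)

/-- The standard conditions on a sequence of functions generating generalized microscopic sets. -/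
def StandardConditions (f : ℕ → ℝ → ℝ) : Prop :=
  (∀ n, ∀ x ∈ Set.Ioo (0:ℝ) 1, f n x ∈ Set.Ioo (0:ℝ) 1) ∧
  (∀ n, StrictMonoOn (f n) (Set.Ioo (0:ℝ) 1)) ∧
  (∀ n, ∀ x ∈ Set.Ioo (0:ℝ) 1, f (n + 1) x ≤ f n x) ∧
  (∀ n, Filter.Tendsto (f n) (nhdsWithin 0 (Set.Ioi 0)) (nhds 0)) ∧
  (∃ x₀ : ℝ, 0 < x₀ ∧ ∀ x : ℝ, 0 < x → x < x₀ → Summable fun n => f n x)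

def StrongMeasureZero (B : Set ℝ) : Prop :=
  ∀ ε : ℕ → ℝ, (∀ k, 0 < ε k) → IntervalCover B ε

def IsFsigma (F : Set ℝ) : Prop :=
  ∃ C : ℕ → Set ℝ, (∀ n, IsClosed (C n)) ∧ F = ⋃ n, C n

/-- `A` can be covered by an `Fσ` set which is `(f n)`-microscopic. -/
def MicroStar (f : ℕ → ℝ → ℝ) (A : Set ℝ) : Prop :=
  ∃ F : Set ℝ, IsFsigma F ∧ FnMicroscopic f F ∧ A ⊆ F

/-- `m`-`(f n)`-microscopic sets. -/
def MFnMicroscopic (f : ℕ → ℝ → ℝ) (m : ℕ) (M : Set ℝ) : Prop :=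
  ∀ ε : ℝ, 0 < ε → ε < 1 → ∃ a b : ℕ → ℝ, M ⊆ ⋃ k, Set.Icc (a k) (b k) ∧
    ∀ k : ℕ, ∀ j < m, b (m * k + j) - a (m * k + j) ≤ f k ε

def TwoNanoscopic (M : Set ℝ) : Prop :=
  MFnMicroscopic (fun k ε => ε ^ (2 ^ k)) 2 M

lemma key (A : Set ℝ) (hA : Microscopic A) (c : ℝ) (hc0 : 0 < c) (hc3 : c ≤ 1/3) :
    ∃ U : Set ℝ, IsOpen U ∧ A ⊆ U ∧ IntervalCover U (fun k => c ^ k) := by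
  have hc1 : c < 1 := lt_of_le_of_lt hc3 (by norm_num)
  obtain ⟨a, b, hcov, hlen⟩ := hA (c ^ 4) (by positivity)
    (pow_lt_one₀ hc0.le hc1 (by norm_num))
  set d : ℕ → ℝ := fun k => if k = 0 then c / 2 else c ^ (k + 3) with hd
  have hdpos : ∀ k, 0 < d k := by
    intro k; simp only [hd]; split <;> positivity
  refine ⟨⋃ k, Ioo (a k - d k) (b k + d k), isOpen_iUnion fun k => isOpen_Ioo, ?_, ?_⟩
  · refine hcov.trans (iUnion_mono fun k => ?_)
    exact Icc_subset_Ioo (by linarith [hdpos k]) (by linarith [hdpos k])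
  · refine ⟨fun j => match j with
      | 0 => a 0 - c / 2
      | 1 => b 0 + c / 2 - c
      | 2 => 0
      | (k + 3) => a (k + 1) - c ^ (k + 4),
      fun j => match j with
      | 0 => a 0 - c / 2 + 1
      | 1 => b 0 + c / 2
      | 2 => 0
      | (k + 3) => b (k + 1) + c ^ (k + 4), ?_, ?_⟩
    · intro x hx
      obtain ⟨k, hk⟩ := mem_iUnion.1 hx
      obtain ⟨hxl, hxr⟩ := hk
      match k with
      | 0 =>
        simp only [hd, if_pos rfl] at hxl hxr
        have hb0 : b 0 - a 0 ≤ 1 := by simpa using hlen 0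
        by_cases hcase : x ≤ a 0 - c / 2 + 1
        · exact mem_iUnion.2 ⟨0, le_of_lt hxl, hcase⟩
        · refine mem_iUnion.2 ⟨1, ?_, le_of_lt hxr⟩
          push_neg at hcase
          linarith
      | (m + 1) =>
        simp only [hd] at hxl hxr
        refine mem_iUnion.2 ⟨m + 3, ?_, ?_⟩ <;> simp_all <;> linarith
    · intro j
      match j with
      | 0 => simp
      | 1 => simp
      | 2 => norm_num; positivity
      | (k + 3) =>
        have h1 : b (k + 1) - a (k + 1) ≤ c ^ (4 * (k + 1)) := by
          simpa [← pow_mul] using hlen (k + 1)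
        have h2 : c ^ (4 * (k + 1)) ≤ c ^ (k + 4) :=
          pow_le_pow_of_le_one hc0.le hc1.le (by omega)
        have h3 : (3 : ℝ) * c ^ (k + 4) ≤ c ^ (k + 3) := by
          have : c ^ (k + 4) = c * c ^ (k + 3) := by ring
          rw [this]
          have hpow : (0:ℝ) < c ^ (k+3) := by positivity
          nlinarith
        simp only
        linarith

theorem stmt2 (A : Set ℝ) (hA : Microscopic A) :
    ∃ G : Set ℝ, IsGδ G ∧ A ⊆ G ∧ Microscopic G := by
  choose U hUopen hUsub hUcov using fun n : ℕ =>
    key A hA (1/((n:ℝ)+3)) (by positivity)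
      (by
        have h0 : (0:ℝ) ≤ (n:ℝ) := Nat.cast_nonneg n
        rw [div_le_div_iff₀ (by linarith) (by norm_num)]
        linarith)
  refine ⟨⋂ n, U n, IsGδ.iInter fun n => (hUopen n).isGδ, subset_iInter hUsub, ?_⟩
  intro ε hε0 hε1
  obtain ⟨n, hn⟩ := exists_nat_gt (1/ε)
  have h0 : (0:ℝ) ≤ (n:ℝ) := Nat.cast_nonneg n
  have hn' : 1 < ε * n := by
    rw [div_lt_iff₀ hε0] at hn; linarith
  have hcε : 1/((n:ℝ)+3) ≤ ε := by
    rw [div_le_iff₀ (by linarith)]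
    nlinarith
  obtain ⟨a, b, hcov, hlen⟩ := hUcov n
  exact ⟨a, b, (iInter_subset U n).trans hcov,
    fun k => (hlen k).trans (pow_le_pow_left₀ (by positivity) hcε k)⟩
end

section
/- Let (f_n)_{n∈ℕ} be a nonincreasing sequence of increasing functions f_n : (0,1) → (0,1) with lim_{x→0⁺} f_n(x) = 0 for all n, and suppose there exists x₀ ∈ (0,1) such that ∑_n f_n(x) converges for all x ∈ (0,x₀). Then every (f_n)-microscopic set has Lebesgue measure zero. -/
/-! Fix `x` below `x₀` and `1`. For `ε ≤ x` monotonicity gives `0 ≤ f n ε ≤ f n x`, so by dominated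
convergence for series `∑ f n ε → 0` as `ε → 0⁺`. A cover with lengths `f n ε` bounds the measure
of `M` by that sum. -/

open Set MeasureTheory

theorem IntervalCover.volume_le_ofReal_tsum {M : Set ℝ} {len : ℕ → ℝ} (hM : IntervalCover M len)
    (hlen : ∀ k, 0 ≤ len k) (hsum : Summable len) : volume M ≤ ENNReal.ofReal (∑' k, len k) := by
  obtain ⟨a, b, hcover, hab⟩ := hM
  calc volume M ≤ volume (⋃ k, Icc (a k) (b k)) := measure_mono hcover
    _ ≤ ∑' k, volume (Icc (a k) (b k)) := measure_iUnion_le _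
    _ = ∑' k, ENNReal.ofReal (b k - a k) := by simp only [Real.volume_Icc]
    _ ≤ ∑' k, ENNReal.ofReal (len k) := ENNReal.tsum_le_tsum fun k ↦ ENNReal.ofReal_le_ofReal (hab k)
    _ = ENNReal.ofReal (∑' k, len k) := (ENNReal.ofReal_tsum_of_nonneg hlen hsum).symm

open Filter Topology in
theorem tendsto_tsum_nhdsGT_zero {f : ℕ → ℝ → ℝ} {x : ℝ} (hx : 0 < x) (hsum : Summable (f · x))
    (hbound : ∀ n, ∀ ε ∈ Ioc 0 x, 0 ≤ f n ε ∧ f n ε ≤ f n x)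
    (htend : ∀ n, Tendsto (f n) (𝓝[>] 0) (𝓝 0)) :
    Tendsto (fun ε ↦ ∑' n, f n ε) (𝓝[>] 0) (𝓝 0) := by
  have hdom : ∀ᶠ ε in 𝓝[>] 0, ∀ n, ‖f n ε‖ ≤ f n x := by
    filter_upwards [Ioc_mem_nhdsGT hx] with ε hε n
    rw [Real.norm_of_nonneg (hbound n ε hε).1]
    exact (hbound n ε hε).2
  simpa using tendsto_tsum_of_dominated_convergence hsum htend hdom

theorem stmt3 (f : ℕ → ℝ → ℝ) (hf : StandardConditions f)
    (M : Set ℝ) (hM : FnMicroscopic f M) : volume M = 0 := by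
  obtain ⟨hmem, hmono, -, htend, x₀, hx₀, hsum⟩ := hf
  obtain ⟨x, hx, hx₀1⟩ := exists_between (lt_min hx₀ one_pos)
  have hxx₀ : x < x₀ := hx₀1.trans_le (min_le_left _ _)
  have hx1 : x < 1 := hx₀1.trans_le (min_le_right _ _)
  have hbound : ∀ n, ∀ ε ∈ Ioc 0 x, 0 ≤ f n ε ∧ f n ε ≤ f n x := fun n ε ⟨hε, hεx⟩ ↦
    ⟨(hmem n ε ⟨hε, hεx.trans_lt hx1⟩).1.le,
      (hmono n).monotoneOn ⟨hε, hεx.trans_lt hx1⟩ ⟨hx, hx1⟩ hεx⟩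
  have hlim := ENNReal.tendsto_ofReal (tendsto_tsum_nhdsGT_zero hx (hsum x hx hxx₀) hbound htend)
  rw [ENNReal.ofReal_zero] at hlim
  refine le_antisymm (ge_of_tendsto hlim ?_) zero_le
  filter_upwards [Ioc_mem_nhdsGT hx] with ε ⟨hε, hεx⟩
  exact (hM ε hε (hεx.trans_lt hx1)).volume_le_ofReal_tsum
    (fun n ↦ (hbound n ε ⟨hε, hεx⟩).1) (hsum ε hε (hεx.trans_lt hxx₀))
end

section
/- For every set X ⊆ ℝ of Lebesgue measure zero there exists a sequence of functions (g_n)_{n∈ℕ} (satisfying the standard conditions: each g_n : (0,1) → (0,1) increasing, the sequence nonincreasing in n, lim_{x→0⁺} g_n(x)=0 for each n, and ∑_n g_n(x) convergent for small x) such that X is (g_n)-microscopic. -/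
open Set MeasureTheory

/-! Cover `X`, for each `m`, by intervals of total length at most `4⁻ᵐ`. Weighting the `m`-th
cover by `2ᵐ` and summing over `m` gives a single positive summable sequence `v` such that for
every `ε > 0` some cover of `X` has `k`-th interval of length at most `ε * v k`. Since `v > 0` and
`v → 0`, it has a decreasing rearrangement; normalised to `w ≤ 1`, the functions
`g n x = x * w n` satisfy the standard conditions and make `X` `(g n)`-microscopic. -/

open Filter Function
open scoped ENNReal

theorem Filter.Tendsto.exists_monotone_comp_equiv {α : Type*} [LinearOrder α] [NoMaxOrder α]
    {u : ℕ → α} (hu : Tendsto u cofinite atTop) : ∃ σ : ℕ ≃ ℕ, Monotone (u ∘ σ) := by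
  -- Greedy enumeration: `σ n` minimises `u` off the finite set `S n = {σ 0, …, σ (n-1)}`.
  have hpick : ∀ s : Finset ℕ, ∃ k ∉ s, ∀ j ∉ s, u k ≤ u j := fun s =>
    hu.exists_within_forall_le (s := (↑s)ᶜ) s.finite_toSet.infinite_compl.nonempty
  choose pick hpick_notMem hpick_le using hpick
  let S : ℕ → Finset ℕ := fun n => Nat.rec ∅ (fun _ s => insert (pick s) s) n
  let σ : ℕ → ℕ := fun n => pick (S n)
  have hS : ∀ n, S n = (Finset.range n).image σ := by
    intro n
    induction n with
    | zero => rfl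
    | succ n ih =>
      change insert (σ n) (S n) = _
      rw [ih, Finset.range_add_one, Finset.image_insert]
  have hσ_notMem : ∀ {m n}, m ≤ n → σ n ∉ S m := fun {m n} hmn hn =>
    have hsub : S m ⊆ S n := by
      rw [hS, hS]
      exact Finset.image_subset_image (Finset.range_subset_range.2 hmn)
    hpick_notMem (S n) (hsub hn)
  have hinj : Injective σ := .of_lt_imp_ne fun m n hlt heq => by
    refine hσ_notMem (le_refl n) ?_
    rw [← heq, hS n]
    exact Finset.mem_image_of_mem σ (Finset.mem_range.2 hlt)
  have hsurj : Surjective σ := by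
    intro k
    by_contra! hk
    have hle : ∀ n, u (σ n) ≤ u k := fun n =>
      hpick_le (S n) k (by simpa [hS] using fun m _ => hk m)
    have hfin : {j | u j ≤ u k}.Finite := by
      simpa using eventually_cofinite.1 (hu.eventually_gt_atTop (u k))
    exact Set.infinite_range_of_injective hinj (hfin.subset (Set.range_subset_iff.2 hle))
  exact ⟨Equiv.ofBijective σ ⟨hinj, hsurj⟩,
    monotone_nat_of_le_succ fun n => hpick_le (S n) _ (hσ_notMem n.le_succ)⟩

lemma exists_Ioc_superset_of_length_lt {s : Set ℝ} {c : ℝ≥0∞}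
    (h : StieltjesFunction.id.length s < c) :
    ∃ a b : ℝ, a ≤ b ∧ s ⊆ Ioc a b ∧ ENNReal.ofReal (b - a) < c := by
  simp only [StieltjesFunction.length_eq, iInf_lt_iff, StieltjesFunction.id_apply] at h
  obtain ⟨a, b, hs, hlt⟩ := h
  refine ⟨a, max a b, le_max_left a b, fun x hx => ?_, ?_⟩
  · exact Ioc_subset_Ioc_right (le_max_right a b) (hs ⟨hx, not_isBot x⟩)
  · rcases le_total a b with hab | hba
    · rwa [max_eq_right hab]
    · simpa [max_eq_left hba] using zero_le.trans_lt hlt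

lemma exists_Icc_cover_of_volume_eq_zero {X : Set ℝ} (hX : volume X = 0) {δ : ℝ}
    (hδ : 0 < δ) :
    ∃ a b : ℕ → ℝ, (∀ k, a k ≤ b k) ∧ X ⊆ ⋃ k, Icc (a k) (b k) ∧
      Summable (fun k => b k - a k) ∧ ∑' k, (b k - a k) ≤ δ := by
  have hδ2 : ENNReal.ofReal (δ / 2) ≠ 0 := (ENNReal.ofReal_pos.2 (half_pos hδ)).ne'
  obtain ⟨η, hη_pos, hη_sum⟩ := ENNReal.exists_pos_sum_of_countable' hδ2 ℕ
  have hX' : StieltjesFunction.id.outer X < ENNReal.ofReal (δ / 2) := by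
    rw [Real.volume_eq_stieltjes_id, StieltjesFunction.measure] at hX
    exact hX.trans_lt (pos_iff_ne_zero.2 hδ2)
  rw [StieltjesFunction.outer, OuterMeasure.ofFunction_apply] at hX'
  obtain ⟨t, ht⟩ := iInf_lt_iff.1 hX'
  obtain ⟨hXt, ht_sum⟩ := iInf_lt_iff.1 ht
  set len := StieltjesFunction.id.length
  have ht_fin : ∀ n, len (t n) ≠ ∞ :=
    ENNReal.ne_top_of_tsum_ne_top (lt_trans ht_sum ENNReal.ofReal_lt_top).ne
  have ht_lt : ∀ n, len (t n) < len (t n) + η n := fun n =>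
    ENNReal.lt_add_right (ht_fin n) (hη_pos n).ne'
  choose a b hab hsub hlen using fun n => exists_Ioc_superset_of_length_lt (ht_lt n)
  have hsum : ∑' k, ENNReal.ofReal (b k - a k) ≤ ENNReal.ofReal δ :=
    calc ∑' k, ENNReal.ofReal (b k - a k)
        ≤ ∑' k, (len (t k) + η k) := ENNReal.tsum_le_tsum fun k => (hlen k).le
      _ = ∑' k, len (t k) + ∑' k, η k := ENNReal.tsum_add
      _ ≤ ENNReal.ofReal (δ / 2) + ENNReal.ofReal (δ / 2) := add_le_add ht_sum.le hη_sum.le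
      _ = ENNReal.ofReal δ := by
        rw [← ENNReal.ofReal_add (half_pos hδ).le (half_pos hδ).le, add_halves]
  have hnonneg : ∀ k, 0 ≤ b k - a k := fun k => sub_nonneg.2 (hab k)
  have hsummable : Summable fun k => b k - a k := by
    simpa [ENNReal.toReal_ofReal (hnonneg _)] using
      ENNReal.summable_toReal (ne_top_of_le_ne_top ENNReal.ofReal_ne_top hsum)
  refine ⟨a, b, hab, hXt.trans (iUnion_mono fun k => (hsub k).trans Ioc_subset_Icc_self),
    hsummable, ?_⟩
  rwa [← ENNReal.ofReal_tsum_of_nonneg hnonneg hsummable, ENNReal.ofReal_le_ofReal_iff hδ.le]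
    at hsum

lemma summable_tsum_swap_of_nonneg {α β : Type*} {f : α → β → ℝ} (hf : ∀ a b, 0 ≤ f a b)
    (hrow : ∀ a, Summable (f a)) (hsum : Summable fun a => ∑' b, f a b) :
    (∀ b, Summable fun a => f a b) ∧ Summable fun b => ∑' a, f a b :=
  (summable_prod_of_nonneg fun p => hf p.2 p.1).1
    ((summable_prod_of_nonneg fun p => hf p.1 p.2).2 ⟨hrow, hsum⟩).prod_symm

lemma IntervalCover.mono {M : Set ℝ} {len len' : ℕ → ℝ} (h : IntervalCover M len)
    (hle : ∀ k, len k ≤ len' k) : IntervalCover M len' :=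
  let ⟨a, b, hM, hab⟩ := h
  ⟨a, b, hM, fun k => (hab k).trans (hle k)⟩

lemma IntervalCover.comp_equiv {M : Set ℝ} {len : ℕ → ℝ} (h : IntervalCover M len)
    (σ : ℕ ≃ ℕ) : IntervalCover M (len ∘ σ) := by
  obtain ⟨a, b, hM, hab⟩ := h
  refine ⟨a ∘ σ, b ∘ σ, ?_, fun k => hab (σ k)⟩
  rwa [← σ.surjective.iUnion_comp] at hM

lemma exists_summable_forall_intervalCover_mul {X : Set ℝ} (hX : volume X = 0) :
    ∃ v : ℕ → ℝ, (∀ k, 0 < v k) ∧ Summable v ∧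
      ∀ ε > 0, IntervalCover X fun k => ε * v k := by
  choose a b hab hcover hsummable hsum using
    fun m : ℕ => exists_Icc_cover_of_volume_eq_zero hX (by positivity : (0 : ℝ) < (1 / 4) ^ m)
  set f : ℕ → ℕ → ℝ := fun m k => 2 ^ m * (b m k - a m k)
  have hf : ∀ m k, 0 ≤ f m k := fun m k => mul_nonneg (by positivity) (sub_nonneg.2 (hab m k))
  have hrow_le : ∀ m, ∑' k, f m k ≤ (1 / 2) ^ m := fun m =>
    calc ∑' k, f m k = 2 ^ m * ∑' k, (b m k - a m k) := tsum_mul_left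
      _ ≤ 2 ^ m * (1 / 4) ^ m := by gcongr; exact hsum m
      _ = (1 / 2) ^ m := by rw [← mul_pow]; norm_num
  obtain ⟨hcol, hcol_sum⟩ := summable_tsum_swap_of_nonneg hf (fun m => (hsummable m).mul_left _)
    (summable_geometric_two.of_nonneg_of_le (fun m => tsum_nonneg (hf m)) hrow_le)
  refine ⟨fun k => (1 / 2) ^ k + ∑' m, f m k,
    fun k => add_pos_of_pos_of_nonneg (by positivity) (tsum_nonneg fun m => hf m k),
    summable_geometric_two.add hcol_sum, fun ε hε => ?_⟩
  obtain ⟨m, hm⟩ := exists_pow_lt_of_lt_one hε (by norm_num : (1 / 2 : ℝ) < 1)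
  refine ⟨a m, b m, hcover m, fun k => ?_⟩
  have hfv : f m k ≤ (1 / 2) ^ k + ∑' m, f m k :=
    ((hcol k).le_tsum m fun j _ => hf j k).trans (le_add_of_nonneg_left (by positivity))
  calc b m k - a m k = (1 / 2) ^ m * f m k := by
        simp only [f, ← mul_assoc, ← mul_pow]; norm_num
    _ ≤ ε * ((1 / 2) ^ k + ∑' m, f m k) := mul_le_mul hm.le hfv (hf m k) hε.le

lemma exists_antitone_summable_forall_intervalCover_mul {X : Set ℝ} (hX : volume X = 0) :
    ∃ w : ℕ → ℝ, (∀ k, 0 < w k) ∧ (∀ k, w k ≤ 1) ∧ Antitone w ∧ Summable w ∧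
      ∀ ε > 0, IntervalCover X fun k => ε * w k := by
  obtain ⟨v, hpos, hsum, hcover⟩ := exists_summable_forall_intervalCover_mul hX
  have hv_inv : Tendsto v⁻¹ cofinite atTop := by
    rw [Nat.cofinite_eq_atTop]
    exact (tendsto_nhdsWithin_iff.2
      ⟨hsum.tendsto_atTop_zero, .of_forall hpos⟩).inv_tendsto_nhdsGT_zero
  obtain ⟨σ, hσ⟩ := hv_inv.exists_monotone_comp_equiv
  have hanti : Antitone (v ∘ σ) := fun i j hij => (inv_le_inv₀ (hpos _) (hpos _)).1 (hσ hij)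
  refine ⟨fun k => v (σ k) / v (σ 0), fun k => div_pos (hpos _) (hpos _),
    fun k => (div_le_one (hpos _)).2 (hanti k.zero_le),
    fun i j hij => div_le_div_of_nonneg_right (hanti hij) (hpos _).le,
    (σ.summable_iff.2 hsum).div_const _, fun ε hε => ?_⟩
  refine ((hcover _ (div_pos hε (hpos (σ 0)))).comp_equiv σ).mono fun k => le_of_eq ?_
  simp only [comp_apply]
  ring

lemma standardConditions_mul {w : ℕ → ℝ} (hpos : ∀ n, 0 < w n) (hle : ∀ n, w n ≤ 1)
    (hanti : Antitone w) (hsum : Summable w) : StandardConditions fun n x => x * w n := by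
  refine ⟨fun n x hx => ⟨mul_pos hx.1 (hpos n), ?_⟩,
    fun n x _ y _ hxy => mul_lt_mul_of_pos_right hxy (hpos n),
    fun n x hx => mul_le_mul_of_nonneg_left (hanti n.le_succ) hx.1.le, fun n => ?_,
    ⟨1, one_pos, fun x _ _ => hsum.mul_left x⟩⟩
  · exact (mul_le_of_le_one_right hx.1.le (hle n)).trans_lt hx.2
  · exact tendsto_nhdsWithin_of_tendsto_nhds
      (by simpa using (continuous_mul_const (w n)).tendsto 0)

theorem stmt4 (X : Set ℝ) (hX : volume X = 0) :
    ∃ g : ℕ → ℝ → ℝ, StandardConditions g ∧ FnMicroscopic g X := by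
  obtain ⟨w, hpos, hle, hanti, hsum, hcover⟩ :=
    exists_antitone_summable_forall_intervalCover_mul hX
  exact ⟨fun n x => x * w n, standardConditions_mul hpos hle hanti hsum,
    fun ε hε _ => hcover ε hε⟩
end

section
/- Let (f_n) be a sequence of functions satisfying the standard conditions for generalized microscopic sets. Then there exists a set X ⊆ ℝ that is (f_n)-microscopic but is not contained in any F_σ set that is (f_n)-microscopic. -/
open Set MeasureTheory

section aux

open Filter Topology

set_option maxHeartbeats 1000000 in
/-- For every `δ > 0` there is `ε ∈ (0,1)` with `∑' k, f k ε < δ`. -/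
lemma fnSmallSum (f : ℕ → ℝ → ℝ) (hf : StandardConditions f) {δ : ℝ} (hδ : 0 < δ) :
    ∃ ε : ℝ, 0 < ε ∧ ε < 1 ∧ Summable (fun k => f k ε) ∧ ∑' k, f k ε < δ := by
  obtain ⟨hpos, hmono, hdec, htend, x₀, hx₀, hsum⟩ := hf
  set x : ℝ := min x₀ 1 / 2 with hxdef
  have hx0 : 0 < x := by positivity
  have hx1 : x < 1 := by
    have : min x₀ 1 ≤ 1 := min_le_right _ _
    simp only [hxdef]; linarith
  have hxx₀ : x < x₀ := by
    have : min x₀ 1 ≤ x₀ := min_le_left _ _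
    simp only [hxdef]; linarith
  have hS : Summable fun n => f n x := hsum x hx0 hxx₀
  -- choose N with tail sum < δ/2
  have htail : Tendsto (fun i => ∑' k, f (k + i) x) atTop (𝓝 0) :=
    tendsto_sum_nat_add (fun k => f k x)
  obtain ⟨N, hN⟩ := (htail.eventually_lt_const (by linarith : (0:ℝ) < δ/2)).exists
  -- choose ε small
  have hev : ∀ᶠ ε in 𝓝[>] (0:ℝ),
      (ε ∈ Set.Ioo (0:ℝ) x ∧ ∀ k ∈ Finset.range N, f k ε < δ / (2 * (N + 1))) := by
    have h1 : Set.Ioo (0:ℝ) x ∈ 𝓝[>] (0:ℝ) :=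
      Ioo_mem_nhdsGT_of_mem ⟨le_refl _, hx0⟩
    have h2 : ∀ᶠ ε in 𝓝[>] (0:ℝ), ∀ k ∈ Finset.range N, f k ε < δ / (2 * (N + 1)) := by
      rw [eventually_all_finset]
      intro k _
      exact (htend k).eventually_lt_const (by positivity)
    exact (eventually_of_mem h1 (fun x hx => hx)).and h2
  obtain ⟨ε, ⟨hε, hsmall⟩⟩ := hev.exists
  obtain ⟨hε0, hεx⟩ := hε
  have hε1 : ε < 1 := hεx.trans hx1
  have hεI : ε ∈ Set.Ioo (0:ℝ) 1 := ⟨hε0, hε1⟩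
  have hxI : x ∈ Set.Ioo (0:ℝ) 1 := ⟨hx0, hx1⟩
  have hle : ∀ k, f k ε ≤ f k x := fun k => le_of_lt (hmono k hεI hxI hεx)
  have hSε : Summable fun k => f k ε :=
    Summable.of_nonneg_of_le (fun k => (hpos k ε hεI).1.le) hle hS
  refine ⟨ε, hε0, hε1, hSε, ?_⟩
  have hsplit : ∑ k ∈ Finset.range N, f k ε + ∑' k, f (k + N) ε = ∑' k, f k ε :=
    Summable.sum_add_tsum_nat_add N hSε
  have h1 : ∑ k ∈ Finset.range N, f k ε ≤ δ / 2 := by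
    calc ∑ k ∈ Finset.range N, f k ε
        ≤ ∑ _k ∈ Finset.range N, δ / (2 * (N + 1)) :=
          Finset.sum_le_sum (fun k hk => (hsmall k hk).le)
      _ = N * (δ / (2 * (N + 1))) := by
          rw [Finset.sum_const, Finset.card_range]; ring
      _ ≤ ((N:ℝ) + 1) * (δ / (2 * (N + 1))) := by
          have hdivnn : 0 ≤ δ / (2 * ((N:ℝ) + 1)) := by positivity
          nlinarith
      _ = δ / 2 := by
          have : (2 : ℝ) * ((N:ℝ) + 1) ≠ 0 := by positivity
          field_simp
  have h2 : ∑' k, f (k + N) ε ≤ ∑' k, f (k + N) x := by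
    have hs1 : Summable (fun k => f (k + N) ε) := (summable_nat_add_iff N).2 hSε
    have hs2 : Summable (fun k => f (k + N) x) := (summable_nat_add_iff N).2 hS
    exact Summable.tsum_le_tsum (fun k => hle _) hs1 hs2
  linarith [hsplit, h1, h2, hN]

/-- A closed interval contained in an `(f n)`-microscopic set is degenerate. -/
lemma fnNoInterval (f : ℕ → ℝ → ℝ) (hf : StandardConditions f) {F : Set ℝ}
    (hF : FnMicroscopic f F) {u v : ℝ} (huv : Set.Icc u v ⊆ F) : ¬ u < v := by
  intro hlt
  obtain ⟨ε, hε0, hε1, hSε, hεδ⟩ := fnSmallSum f hf (sub_pos.mpr hlt)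
  obtain ⟨a, b, hcov, hlen⟩ := hF ε hε0 hε1
  have hnn : ∀ k, (0:ℝ) ≤ f k ε := fun k => (hf.1 k ε ⟨hε0, hε1⟩).1.le
  have hμ : ENNReal.ofReal (v - u) ≤ ENNReal.ofReal (∑' k, f k ε) := by
    calc ENNReal.ofReal (v - u) = volume (Set.Icc u v) := (Real.volume_Icc).symm
      _ ≤ volume (⋃ k, Set.Icc (a k) (b k)) :=
          measure_mono ((Set.Subset.trans huv hcov))
      _ ≤ ∑' k, volume (Set.Icc (a k) (b k)) := measure_iUnion_le _
      _ ≤ ∑' k, ENNReal.ofReal (f k ε) := by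
          refine ENNReal.tsum_le_tsum (fun k => ?_)
          rw [Real.volume_Icc]
          exact ENNReal.ofReal_le_ofReal (hlen k)
      _ = ENNReal.ofReal (∑' k, f k ε) :=
          (ENNReal.ofReal_tsum_of_nonneg hnn hSε).symm
  have := (ENNReal.ofReal_le_ofReal_iff (tsum_nonneg hnn)).mp hμ
  linarith

end aux


theorem stmt5 (f : ℕ → ℝ → ℝ) (hf : StandardConditions f) :
    ∃ X : Set ℝ, FnMicroscopic f X ∧
      ∀ F : Set ℝ, IsFsigma F → FnMicroscopic f F → ¬ X ⊆ F := by
  classical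
  obtain ⟨hpos, hmono, hdec, htend, hx₀⟩ := hf
  -- a dense sequence
  set e : ℕ ≃ ℚ := (Denumerable.eqv ℚ).symm with he
  set q : ℕ → ℝ := fun k => (e k : ℝ) with hq
  have hqdense : DenseRange q := by
    have hrange : Set.range q = Set.range ((↑) : ℚ → ℝ) := by
      rw [hq]
      exact Function.Surjective.range_comp e.surjective ((↑) : ℚ → ℝ)
    unfold DenseRange
    rw [hrange]
    exact Rat.denseRange_cast
  set c : ℕ → ℝ := fun n => 1 / (n + 2) with hc
  have hcI : ∀ n, c n ∈ Set.Ioo (0:ℝ) 1 := by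
    intro n
    constructor
    · positivity
    · rw [hc]
      rw [div_lt_one (by positivity)]
      have : (0:ℝ) ≤ (n:ℝ) := Nat.cast_nonneg n
      linarith
  set r : ℕ → ℕ → ℝ := fun n k => f k (c n) / 2 with hr
  have hrpos : ∀ n k, 0 < r n k := fun n k => by
    have := (hpos k (c n) (hcI n)).1
    rw [hr]; positivity
  set U : ℕ → Set ℝ := fun n => ⋃ k, Set.Ioo (q k - r n k) (q k + r n k) with hU
  refine ⟨⋂ n, U n, ?_, ?_⟩
  · -- microscopic
    intro ε hε0 hε1
    obtain ⟨n, hn⟩ := exists_nat_gt (1 / ε)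
    have hcn : c n < ε := by
      rw [hc, div_lt_iff₀ (by positivity)]
      rw [div_lt_iff₀ hε0] at hn
      nlinarith [hε0, (Nat.cast_nonneg n : (0:ℝ) ≤ n)]
    refine ⟨fun k => q k - r n k, fun k => q k + r n k, ?_, ?_⟩
    · refine Set.Subset.trans (Set.iInter_subset _ n) ?_
      rw [hU]
      exact Set.iUnion_mono fun k => Set.Ioo_subset_Icc_self
    · intro k
      have h1 : q k + r n k - (q k - r n k) = f k (c n) := by rw [hr]; ring
      rw [h1]
      exact le_of_lt (hmono k (hcI n) ⟨hε0, hε1⟩ hcn)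
  · -- not contained in any Fσ microscopic set
    rintro F ⟨C, hCclosed, rfl⟩ hFmicro hsub
    by_cases hint : ∃ m, (interior (C m)).Nonempty
    · obtain ⟨m, z, hz⟩ := hint
      obtain ⟨δ, hδ0, hball⟩ := Metric.isOpen_iff.mp isOpen_interior z hz
      have hIcc : Set.Icc (z - δ/2) (z + δ/2) ⊆ ⋃ m, C m := by
        intro y hy
        refine Set.mem_iUnion.mpr ⟨m, interior_subset (hball ?_)⟩
        rw [Metric.mem_ball, Real.dist_eq]
        rw [Set.mem_Icc] at hy
        rw [abs_lt]
        constructor <;> linarith [hy.1, hy.2]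
      exact fnNoInterval f ⟨hpos, hmono, hdec, htend, hx₀⟩ hFmicro hIcc (by linarith)
    · push_neg at hint
      set V : ℕ ⊕ ℕ → Set ℝ := Sum.elim U (fun m => (C m)ᶜ) with hV
      have hVopen : ∀ i, IsOpen (V i) := by
        rintro (n | m)
        · exact isOpen_iUnion fun k => isOpen_Ioo
        · exact (hCclosed m).isOpen_compl
      have hVdense : ∀ i, Dense (V i) := by
        rintro (n | m)
        · refine Dense.mono ?_ hqdense
          rintro y ⟨k, rfl⟩
          exact Set.mem_iUnion.mpr ⟨k, by
            constructor <;> [linarith [hrpos n k]; linarith [hrpos n k]]⟩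
        · rw [hV]
          simp only [Sum.elim_inr]
          rw [← interior_eq_empty_iff_dense_compl]
          exact hint m
      obtain ⟨y, hy⟩ := (dense_iInter_of_isOpen hVopen hVdense).nonempty
      have hyX : y ∈ ⋂ n, U n := by
        refine Set.mem_iInter.mpr fun n => ?_
        have := Set.mem_iInter.mp hy (Sum.inl n)
        simpa [hV] using this
      obtain ⟨m, hm⟩ := Set.mem_iUnion.mp (hsub hyX)
      have : y ∈ (C m)ᶜ := by
        have := Set.mem_iInter.mp hy (Sum.inr m)
        simpa [hV] using this
      exact this hm
end

section
/- Let (f_n) satisfy the standard conditions, let X ⊆ ℝ be (f_n)-microscopic with closure equal to an unbounded interval, and let Y ⊆ ℝ have strong measure zero. Then X ∪ Y is (f_n)-microscopic. -/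
open Set MeasureTheory

section stmt10aux

open Filter

/-- Choice of a fine parameter `δ`: all values at level `δ` are small and all finite partial
sums of the level-`δ` lengths are at most a quarter of the first budget `f 0 ε`. -/
lemma stmt10_exists_good_delta (f : ℕ → ℝ → ℝ) (hf : StandardConditions f) {ε : ℝ}
    (hε0 : 0 < ε) (hε1 : ε < 1) :
    ∃ δ : ℝ, 0 < δ ∧ δ < ε ∧ f 0 δ ≤ f 0 ε / 4 ∧
      (∀ T : Finset ℕ, ∑ k ∈ T, f k δ ≤ f 0 ε / 4) := by
  classical
  obtain ⟨hval, hmono, hdec, htend, x₀, hx₀, hsum⟩ := hf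
  have hf0ε : 0 < f 0 ε := (hval 0 ε ⟨hε0, hε1⟩).1
  set x₁ : ℝ := min x₀ ε / 2 with hx₁def
  have hx₁0 : 0 < x₁ := by
    have : 0 < min x₀ ε := lt_min hx₀ hε0
    positivity
  have hx₁x₀ : x₁ < x₀ := by
    have h1 : min x₀ ε ≤ x₀ := min_le_left _ _
    have : 0 < min x₀ ε := lt_min hx₀ hε0
    rw [hx₁def]; linarith
  have hx₁ε : x₁ < ε := by
    have h1 : min x₀ ε ≤ ε := min_le_right _ _
    have : 0 < min x₀ ε := lt_min hx₀ hε0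
    rw [hx₁def]; linarith
  have hx₁1 : x₁ < 1 := hx₁ε.trans hε1
  have hx₁Ioo : x₁ ∈ Set.Ioo (0:ℝ) 1 := ⟨hx₁0, hx₁1⟩
  have hsum₁ : Summable (fun n => f n x₁) := hsum x₁ hx₁0 hx₁x₀
  -- tail of the series at `x₁`
  have htail : Tendsto (fun n => ∑' k, f (k + n) x₁) atTop (nhds 0) :=
    tendsto_sum_nat_add (fun n => f n x₁)
  obtain ⟨M, hM⟩ : ∃ M, (∑' k, f (k + M) x₁) < f 0 ε / 8 :=
    (htail.eventually (gt_mem_nhds (by positivity))).exists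
  set η : ℝ := f 0 ε / (8 * (M + 1)) with hηdef
  have hηpos : 0 < η := by positivity
  -- thresholds
  have hth : ∀ k : ℕ, ∃ θ, 0 < θ ∧ ∀ x : ℝ, 0 < x → x < θ → f k x < η := by
    intro k
    have h2 : ∀ᶠ x in nhdsWithin 0 (Set.Ioi 0), f k x < η :=
      (htend k).eventually (gt_mem_nhds hηpos)
    rw [Filter.eventually_iff, mem_nhdsGT_iff_exists_Ioo_subset] at h2
    obtain ⟨u, hu, hsub⟩ := h2
    exact ⟨u, hu, fun x hx0 hxu => hsub ⟨hx0, hxu⟩⟩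
  choose θ hθpos hθ using hth
  have hrne : (Finset.range (M + 1)).Nonempty := ⟨0, by simp⟩
  set θmin : ℝ := (Finset.range (M + 1)).inf' hrne θ with hθmindef
  have hθminpos : 0 < θmin := by
    rw [hθmindef, Finset.lt_inf'_iff]
    intro k _; exact hθpos k
  set δ : ℝ := min (x₁ / 2) (θmin / 2) with hδdef
  have hδ0 : 0 < δ := lt_min (by positivity) (by positivity)
  have hδx₁ : δ < x₁ := by
    have := min_le_left (x₁ / 2) (θmin / 2)
    rw [hδdef]; linarith
  have hδε : δ < ε := hδx₁.trans hx₁ε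
  have hδ1 : δ < 1 := hδε.trans hε1
  have hδIoo : δ ∈ Set.Ioo (0:ℝ) 1 := ⟨hδ0, hδ1⟩
  have hsmall : ∀ k ≤ M, f k δ < η := by
    intro k hk
    apply hθ k δ hδ0
    have h1 : δ ≤ θmin / 2 := min_le_right _ _
    have h2 : θmin ≤ θ k :=
      Finset.inf'_le _ (Finset.mem_range.mpr (Nat.lt_succ_of_le hk))
    linarith
  have hδlex₁ : ∀ k, f k δ ≤ f k x₁ := fun k => ((hmono k) hδIoo hx₁Ioo hδx₁).le
  have hηle : η ≤ f 0 ε / 8 := by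
    rw [hηdef, div_le_div_iff₀ (by positivity) (by norm_num : (0:ℝ) < 8)]
    nlinarith [mul_nonneg hf0ε.le (Nat.cast_nonneg M : (0:ℝ) ≤ (M:ℝ))]
  refine ⟨δ, hδ0, hδε, ?_, ?_⟩
  · have := hsmall 0 (Nat.zero_le M)
    linarith
  · intro T
    have hsplit :
        (∑ k ∈ T.filter (fun k => k ≤ M), f k δ)
          + ∑ k ∈ T.filter (fun k => ¬ k ≤ M), f k δ = ∑ k ∈ T, f k δ :=
      Finset.sum_filter_add_sum_filter_not T _ _
    have h1 : ∑ k ∈ T.filter (fun k => k ≤ M), f k δ ≤ f 0 ε / 8 := by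
      have hsubset : T.filter (fun k => k ≤ M) ⊆ Finset.range (M + 1) := by
        intro k hk
        exact Finset.mem_range.mpr (Nat.lt_succ_of_le (Finset.mem_filter.mp hk).2)
      have hcard : ((T.filter (fun k => k ≤ M)).card : ℝ) ≤ (M : ℝ) + 1 := by
        have := Finset.card_le_card hsubset
        rw [Finset.card_range] at this
        exact_mod_cast this
      calc ∑ k ∈ T.filter (fun k => k ≤ M), f k δ
          ≤ (T.filter (fun k => k ≤ M)).card • η :=
            Finset.sum_le_card_nsmul _ _ _
              (fun k hk => (hsmall k (Finset.mem_filter.mp hk).2).le)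
        _ = ((T.filter (fun k => k ≤ M)).card : ℝ) * η := nsmul_eq_mul _ _
        _ ≤ ((M : ℝ) + 1) * η := by
            apply mul_le_mul_of_nonneg_right hcard hηpos.le
        _ = f 0 ε / 8 := by
            rw [hηdef]
            have : ((M : ℝ) + 1) ≠ 0 := by positivity
            field_simp
    have h2 : ∑ k ∈ T.filter (fun k => ¬ k ≤ M), f k δ ≤ f 0 ε / 8 := by
      have hb : ∑ k ∈ T.filter (fun k => ¬ k ≤ M), f k δ
          ≤ ∑ k ∈ T.filter (fun k => ¬ k ≤ M), f k x₁ :=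
        Finset.sum_le_sum (fun k _ => hδlex₁ k)
      have hinj : ∀ i ∈ T.filter (fun k => ¬ k ≤ M), ∀ j ∈ T.filter (fun k => ¬ k ≤ M),
          i - M = j - M → i = j := by
        intro i hi j hj hij
        have hi' : M < i := Nat.not_le.mp (Finset.mem_filter.mp hi).2
        have hj' : M < j := Nat.not_le.mp (Finset.mem_filter.mp hj).2
        omega
      have hre : ∑ j ∈ (T.filter (fun k => ¬ k ≤ M)).image (fun k => k - M),
            f (j + M) x₁ = ∑ k ∈ T.filter (fun k => ¬ k ≤ M), f k x₁ := by
        rw [Finset.sum_image hinj]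
        apply Finset.sum_congr rfl
        intro k hk
        have : M < k := Nat.not_le.mp (Finset.mem_filter.mp hk).2
        congr 1
        omega
      have hsummable : Summable (fun j : ℕ => f (j + M) x₁) :=
        (summable_nat_add_iff (f := fun n => f n x₁) M).mpr hsum₁
      have hts : ∑ j ∈ (T.filter (fun k => ¬ k ≤ M)).image (fun k => k - M),
            f (j + M) x₁ ≤ ∑' j, f (j + M) x₁ :=
        Summable.sum_le_tsum _ (fun j _ => (hval _ x₁ hx₁Ioo).1.le) hsummable
      linarith
    have := hsplit
    linarith

/-- The core construction: given a `δ`-fine cover of `X`, a window of length `f 0 ε / 2`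
in whose open subsets `X` is dense, and an interval `Icc A₀ B₀` of length at most `f 0 ε`
containing both the `0`-th interval of the cover and the (slightly enlarged) window,
one can cover `X ∪ Y` with the budgets `f k ε`.  Indeed the single interval `Icc A₀ B₀`
(placed at slot `0`) swallows every cover interval meeting the window; there are infinitely
many of those (finitely many closed intervals of total length `< f 0 ε / 2` cannot cover a
set dense in the window), and their freed slots host a strong-measure-zero cover of `Y`. -/
lemma stmt10_core (f : ℕ → ℝ → ℝ)
    (hval : ∀ n, ∀ x ∈ Set.Ioo (0:ℝ) 1, f n x ∈ Set.Ioo (0:ℝ) 1)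
    (hmono : ∀ n, StrictMonoOn (f n) (Set.Ioo (0:ℝ) 1))
    (hdec : ∀ n, ∀ x ∈ Set.Ioo (0:ℝ) 1, f (n + 1) x ≤ f n x)
    (X Y : Set ℝ) (hY : StrongMeasureZero Y)
    (ε δ : ℝ) (hε : ε ∈ Set.Ioo (0:ℝ) 1) (hδ : δ ∈ Set.Ioo (0:ℝ) 1) (hδε : δ < ε)
    (a b : ℕ → ℝ) (hcov : X ⊆ ⋃ k, Set.Icc (a k) (b k)) (hlen : ∀ k, b k - a k ≤ f k δ)
    (hTsum : ∀ T : Finset ℕ, ∑ k ∈ T, f k δ ≤ f 0 ε / 4)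
    (c : ℝ)
    (hdense : ∀ U : Set ℝ, IsOpen U → U.Nonempty →
      U ⊆ Set.Ioo c (c + f 0 ε / 2) → (X ∩ U).Nonempty)
    (A₀ B₀ : ℝ)
    (hI₀ : Set.Icc (a 0) (b 0) ⊆ Set.Icc A₀ B₀)
    (hWin : Set.Icc (c - f 0 δ) (c + f 0 ε / 2 + f 0 δ) ⊆ Set.Icc A₀ B₀)
    (hB₀ : B₀ - A₀ ≤ f 0 ε) :
    IntervalCover (X ∪ Y) (fun k => f k ε) := by
  classical
  have hf0ε : 0 < f 0 ε := (hval 0 ε hε).1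
  have hf0δ : 0 < f 0 δ := (hval 0 δ hδ).1
  have hfδpos : ∀ k, 0 < f k δ := fun k => (hval k δ hδ).1
  have hfk0 : ∀ k, f k δ ≤ f 0 δ := by
    intro k
    induction k with
    | zero => exact le_rfl
    | succ n ih => exact (hdec n δ hδ).trans ih
  have hfδε : ∀ k, f k δ ≤ f k ε := fun k => ((hmono k) hδ hε hδε).le
  set W : Set ℝ := Set.Ioo c (c + f 0 ε / 2) with hWdef
  set Λ : Set ℕ := {k | (Set.Icc (a k) (b k) ∩ W).Nonempty} with hΛdef
  -- every interval meeting the window is swallowed by `Icc A₀ B₀`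
  have hswallow : ∀ k ∈ Λ, Set.Icc (a k) (b k) ⊆ Set.Icc A₀ B₀ := by
    intro k hk z hz
    obtain ⟨x, hxI, hxW⟩ := hk
    apply hWin
    constructor
    · have h1 : c - f 0 δ ≤ x - f k δ := by
        have := hfk0 k
        have := hxW.1
        linarith
      have h2 : x - f k δ ≤ a k := by
        have := hlen k
        have := hxI.2
        linarith
      linarith [hz.1]
    · have h1 : b k ≤ x + f k δ := by
        have := hlen k
        have := hxI.1
        linarith
      have := hfk0 k
      have := hxW.2
      linarith [hz.2]
  -- infinitely many intervals meet the window
  have hΛinf : Λ.Infinite := by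
    intro hfin
    have hWsub : W ⊆ ⋃ k ∈ hfin.toFinset, Set.Icc (a k) (b k) := by
      intro w hw
      by_contra hwn
      have hUopen : IsOpen (W \ ⋃ k ∈ hfin.toFinset, Set.Icc (a k) (b k)) :=
        IsOpen.sdiff isOpen_Ioo (isClosed_biUnion_finset (fun k _ => isClosed_Icc))
      obtain ⟨x, hxX, hxU⟩ :=
        hdense _ hUopen ⟨w, hw, hwn⟩ (Set.diff_subset.trans (by rw [hWdef]))
      obtain ⟨k, hk⟩ := Set.mem_iUnion.mp (hcov hxX)
      have hkΛ : k ∈ Λ := ⟨x, hk, hxU.1⟩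
      exact hxU.2 (Set.mem_biUnion (hfin.mem_toFinset.mpr hkΛ) hk)
    have hmeas : ENNReal.ofReal (f 0 ε / 2)
        ≤ ENNReal.ofReal (∑ k ∈ hfin.toFinset, f k δ) := by
      calc ENNReal.ofReal (f 0 ε / 2) = MeasureTheory.volume W := by
            rw [hWdef, Real.volume_Ioo]
            congr 1
            ring
        _ ≤ MeasureTheory.volume (⋃ k ∈ hfin.toFinset, Set.Icc (a k) (b k)) :=
            MeasureTheory.measure_mono hWsub
        _ ≤ ∑ k ∈ hfin.toFinset, MeasureTheory.volume (Set.Icc (a k) (b k)) :=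
            MeasureTheory.measure_biUnion_finset_le _ _
        _ ≤ ∑ k ∈ hfin.toFinset, ENNReal.ofReal (f k δ) := by
            apply Finset.sum_le_sum
            intro k _
            rw [Real.volume_Icc]
            exact ENNReal.ofReal_le_ofReal (hlen k)
        _ = ENNReal.ofReal (∑ k ∈ hfin.toFinset, f k δ) :=
            (ENNReal.ofReal_sum_of_nonneg (fun k _ => (hfδpos k).le)).symm
    have h1 : f 0 ε / 2 ≤ ∑ k ∈ hfin.toFinset, f k δ :=
      (ENNReal.ofReal_le_ofReal_iff
        (Finset.sum_nonneg fun k _ => (hfδpos k).le)).mp hmeas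
    have h2 := hTsum hfin.toFinset
    linarith
  have hΛ'inf : (Λ \ {0}).Infinite := hΛinf.diff (Set.finite_singleton 0)
  set e : ℕ ↪ ↥(Λ \ {0}) := hΛ'inf.natEmbedding _ with hedef
  set g : ℕ → ℕ := fun i => (e i : ℕ) with hgdef
  have hginj : Function.Injective g := by
    intro i j hij
    exact e.injective (Subtype.ext hij)
  have hgΛ : ∀ i, g i ∈ Λ := fun i => ((e i).2).1
  have hg0 : ∀ i, g i ≠ 0 := by
    intro i hi
    exact ((e i).2).2 (by simpa using hi)
  obtain ⟨u, v, hYcov, hYlen⟩ := hY (fun i => f (g i) ε) (fun i => (hval _ ε hε).1)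
  refine ⟨fun s => if s = 0 then A₀ else Function.extend g u a s,
          fun s => if s = 0 then B₀ else Function.extend g v b s, ?_, ?_⟩
  · rintro z (hzX | hzY)
    · obtain ⟨k, hk⟩ := Set.mem_iUnion.mp (hcov hzX)
      by_cases hk0 : k = 0
      · subst hk0
        refine Set.mem_iUnion.mpr ⟨0, ?_⟩
        simpa using hI₀ hk
      by_cases hkΛ : k ∈ Λ
      · refine Set.mem_iUnion.mpr ⟨0, ?_⟩
        simpa using hswallow k hkΛ hk
      · refine Set.mem_iUnion.mpr ⟨k, ?_⟩
        have hne : ¬∃ i, g i = k := by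
          rintro ⟨i, hi⟩
          exact hkΛ (hi ▸ hgΛ i)
        simp only [if_neg hk0, Function.extend_apply' _ _ _ hne]
        exact hk
    · obtain ⟨i, hi⟩ := Set.mem_iUnion.mp (hYcov hzY)
      refine Set.mem_iUnion.mpr ⟨g i, ?_⟩
      simp only [if_neg (hg0 i), hginj.extend_apply]
      exact hi
  · intro s
    by_cases hs0 : s = 0
    · subst hs0
      simpa using hB₀
    simp only [if_neg hs0]
    by_cases hs : ∃ i, g i = s
    · obtain ⟨i, rfl⟩ := hs
      rw [hginj.extend_apply, hginj.extend_apply]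
      exact hYlen i
    · rw [Function.extend_apply' _ _ _ hs, Function.extend_apply' _ _ _ hs]
      exact (hlen s).trans (hfδε s)

end stmt10aux

theorem stmt10 (f : ℕ → ℝ → ℝ) (hf : StandardConditions f)
    (X Y : Set ℝ) (hX : FnMicroscopic f X)
    (hcl : closure X = Set.univ ∨ ∃ a : ℝ, closure X = Set.Ici a ∨ closure X = Set.Iic a)
    (hY : StrongMeasureZero Y) :
    FnMicroscopic f (X ∪ Y) := by
  intro ε hε0 hε1
  obtain ⟨δ, hδ0, hδε, hδquarter, hδT⟩ := stmt10_exists_good_delta f hf hε0 hε1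
  obtain ⟨hval, hmono, hdec, htend, -⟩ := hf
  have hδ1 : δ < 1 := hδε.trans hε1
  have hεIoo : ε ∈ Set.Ioo (0:ℝ) 1 := ⟨hε0, hε1⟩
  have hδIoo : δ ∈ Set.Ioo (0:ℝ) 1 := ⟨hδ0, hδ1⟩
  have hf0ε : 0 < f 0 ε := (hval 0 ε hεIoo).1
  have hf0δ : 0 < f 0 δ := (hval 0 δ hδIoo).1
  obtain ⟨a₁, b₁, hcov₁, hlen₁⟩ := hX δ hδ0 hδ1
  rcases hcl with hcl | ⟨A, hcl | hcl⟩
  · -- closure X = univ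
    refine stmt10_core f hval hmono hdec X Y hY ε δ hεIoo hδIoo hδε a₁ b₁ hcov₁ hlen₁ hδT
      (b₁ 0)
      ?_ (min (a₁ 0) (b₁ 0 - f 0 δ)) (b₁ 0 + f 0 ε / 2 + f 0 δ) ?_ ?_ ?_
    · intro U hUopen hUne _
      obtain ⟨w, hw⟩ := hUne
      have hwcl : w ∈ closure X := by rw [hcl]; trivial
      obtain ⟨x, hxU, hxX⟩ := mem_closure_iff.mp hwcl U hUopen hw
      exact ⟨x, hxX, hxU⟩
    · intro z hz
      constructor
      · exact le_trans (min_le_left _ _) hz.1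
      · have := hz.2
        linarith [hf0ε, hf0δ]
    · intro z hz
      constructor
      · exact le_trans (min_le_right _ _) hz.1
      · exact hz.2
    · rcases min_cases (a₁ 0) (b₁ 0 - f 0 δ) with ⟨h, -⟩ | ⟨h, -⟩
      · rw [h]
        have := hlen₁ 0
        linarith [hδquarter]
      · rw [h]
        linarith [hδquarter]
  · -- closure X = Set.Ici A
    have hXsub : X ⊆ Set.Ici A := by
      rw [← hcl]; exact subset_closure
    set a₂ : ℕ → ℝ := fun k => if k = 0 then (if b₁ 0 < A then A else a₁ 0) else a₁ k
      with ha₂def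
    set b₂ : ℕ → ℝ := fun k => if k = 0 then (if b₁ 0 < A then A else b₁ 0) else b₁ k
      with hb₂def
    have hcov₂ : X ⊆ ⋃ k, Set.Icc (a₂ k) (b₂ k) := by
      intro x hx
      obtain ⟨k, hk⟩ := Set.mem_iUnion.mp (hcov₁ hx)
      refine Set.mem_iUnion.mpr ⟨k, ?_⟩
      by_cases hk0 : k = 0
      · subst hk0
        by_cases hb : b₁ 0 < A
        · exact absurd (le_trans (hXsub hx) hk.2) (not_le.mpr hb)
        · simpa [ha₂def, hb₂def, hb] using hk
      · simpa [ha₂def, hb₂def, hk0] using hk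
    have hlen₂ : ∀ k, b₂ k - a₂ k ≤ f k δ := by
      intro k
      by_cases hk0 : k = 0
      · subst hk0
        by_cases hb : b₁ 0 < A
        · simp only [ha₂def, hb₂def, if_pos rfl, if_pos hb]
          linarith [hf0δ]
        · simpa [ha₂def, hb₂def, hb] using hlen₁ 0
      · simpa [ha₂def, hb₂def, hk0] using hlen₁ k
    have hb₂A : A ≤ b₂ 0 := by
      by_cases hb : b₁ 0 < A
      · simp [hb₂def, hb]
      · simp only [hb₂def, if_pos rfl, if_neg hb]
        exact not_lt.mp hb
    refine stmt10_core f hval hmono hdec X Y hY ε δ hεIoo hδIoo hδε a₂ b₂ hcov₂ hlen₂ hδT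
      (b₂ 0)
      ?_ (min (a₂ 0) (b₂ 0 - f 0 δ)) (b₂ 0 + f 0 ε / 2 + f 0 δ) ?_ ?_ ?_
    · intro U hUopen hUne hUsub
      obtain ⟨w, hw⟩ := hUne
      have hwA : A ≤ w := by
        have := (hUsub hw).1
        linarith [hb₂A]
      have hwcl : w ∈ closure X := by rw [hcl]; exact hwA
      obtain ⟨x, hxU, hxX⟩ := mem_closure_iff.mp hwcl U hUopen hw
      exact ⟨x, hxX, hxU⟩
    · intro z hz
      constructor
      · exact le_trans (min_le_left _ _) hz.1
      · have := hz.2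
        linarith [hf0ε, hf0δ]
    · intro z hz
      constructor
      · exact le_trans (min_le_right _ _) hz.1
      · exact hz.2
    · rcases min_cases (a₂ 0) (b₂ 0 - f 0 δ) with ⟨h, -⟩ | ⟨h, -⟩
      · rw [h]
        have := hlen₂ 0
        linarith [hδquarter]
      · rw [h]
        linarith [hδquarter]
  · -- closure X = Set.Iic A
    have hXsub : X ⊆ Set.Iic A := by
      rw [← hcl]; exact subset_closure
    set a₂ : ℕ → ℝ := fun k => if k = 0 then (if A < a₁ 0 then A else a₁ 0) else a₁ k
      with ha₂def
    set b₂ : ℕ → ℝ := fun k => if k = 0 then (if A < a₁ 0 then A else b₁ 0) else b₁ k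
      with hb₂def
    have hcov₂ : X ⊆ ⋃ k, Set.Icc (a₂ k) (b₂ k) := by
      intro x hx
      obtain ⟨k, hk⟩ := Set.mem_iUnion.mp (hcov₁ hx)
      refine Set.mem_iUnion.mpr ⟨k, ?_⟩
      by_cases hk0 : k = 0
      · subst hk0
        by_cases hb : A < a₁ 0
        · exact absurd (le_trans hk.1 (hXsub hx)) (not_le.mpr hb)
        · simpa [ha₂def, hb₂def, hb] using hk
      · simpa [ha₂def, hb₂def, hk0] using hk
    have hlen₂ : ∀ k, b₂ k - a₂ k ≤ f k δ := by
      intro k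
      by_cases hk0 : k = 0
      · subst hk0
        by_cases hb : A < a₁ 0
        · simp only [ha₂def, hb₂def, if_pos rfl, if_pos hb]
          linarith [hf0δ]
        · simpa [ha₂def, hb₂def, hb] using hlen₁ 0
      · simpa [ha₂def, hb₂def, hk0] using hlen₁ k
    have ha₂A : a₂ 0 ≤ A := by
      by_cases hb : A < a₁ 0
      · simp [ha₂def, hb]
      · simp only [ha₂def, if_pos rfl, if_neg hb]
        exact not_lt.mp hb
    refine stmt10_core f hval hmono hdec X Y hY ε δ hεIoo hδIoo hδε a₂ b₂ hcov₂ hlen₂ hδT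
      (a₂ 0 - f 0 ε / 2)
      ?_ (a₂ 0 - f 0 ε / 2 - f 0 δ) (max (b₂ 0) (a₂ 0 + f 0 δ)) ?_ ?_ ?_
    · intro U hUopen hUne hUsub
      obtain ⟨w, hw⟩ := hUne
      have hwA : w ≤ A := by
        have := (hUsub hw).2
        have : w < a₂ 0 - f 0 ε / 2 + f 0 ε / 2 := this
        linarith [ha₂A]
      have hwcl : w ∈ closure X := by rw [hcl]; exact hwA
      obtain ⟨x, hxU, hxX⟩ := mem_closure_iff.mp hwcl U hUopen hw
      exact ⟨x, hxX, hxU⟩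
    · intro z hz
      constructor
      · have := hz.1
        linarith [hf0ε, hf0δ]
      · exact le_trans hz.2 (le_max_left _ _)
    · intro z hz
      constructor
      · exact hz.1
      · refine le_trans hz.2 ?_
        have : a₂ 0 - f 0 ε / 2 + f 0 ε / 2 + f 0 δ = a₂ 0 + f 0 δ := by ring
        rw [this]
        exact le_max_right _ _
    · rcases max_cases (b₂ 0) (a₂ 0 + f 0 δ) with ⟨h, -⟩ | ⟨h, -⟩
      · rw [h]
        have := hlen₂ 0
        linarith [hδquarter]
      · rw [h]
        linarith [hδquarter]
end
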